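/- If p ≥ 3 is an even integer and λ ∈ ℝ with |λ| ≥ 1, then |f_λ(x)| > |x| for every real number x. -/

import Mathlib

open Complex Finset
open scoped Nat

/-!
Averaging `exp` over the `p`-th roots of unity kills every Taylor coefficient of degree not
divisible by `p`, so `∑ₖ exp (ωᵏ z) = p ∑ₘ z^(pm) / (pm)!`. For real `x` and even `p` all these
terms are nonnegative, hence `|f_λ x| ≥ p (1 + |x|^p / p!)`, and `p (1 + t^p / p!) > t` for
`t ≥ 0`: trivially when `t < p`, and when `t ≥ p` because `p! ≤ p^p` gives
`p t^p / p! ≥ p (t/p)^p ≥ t`.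
-/

theorem IsPrimitiveRoot.sum_pow_pow_eq_ite {R : Type*} [CommRing R] [IsDomain R] {ζ : R} {p : ℕ}
    (hζ : IsPrimitiveRoot ζ p) (n : ℕ) :
    ∑ k ∈ range p, (ζ ^ k) ^ n = if p ∣ n then (p : R) else 0 := by
  simp_rw [← pow_mul, mul_comm _ n, pow_mul]
  split_ifs with h
  · simp [(hζ.pow_eq_one_iff_dvd n).2 h]
  · have hne : ζ ^ n - 1 ≠ 0 := sub_ne_zero.2 (mt (hζ.pow_eq_one_iff_dvd n).1 h)
    have hroot : (ζ ^ n) ^ p - 1 = 0 := by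
      rw [← pow_mul, mul_comm, pow_mul, hζ.pow_eq_one, one_pow, sub_self]
    exact (mul_eq_zero.1 ((mul_geom_sum _ _).trans hroot)).resolve_left hne

theorem tsum_ite_dvd_eq_tsum_mul {α : Type*} [AddCommMonoid α] [TopologicalSpace α] {p : ℕ}
    (hp : p ≠ 0) (f : ℕ → α) :
    ∑' n, (if p ∣ n then f n else 0) = ∑' m, f (p * m) := by
  refine ((mul_right_injective₀ hp).tsum_eq fun n hn => ?_).symm.trans (tsum_congr fun m => ?_)
  · by_cases h : p ∣ n
    · obtain ⟨m, rfl⟩ := h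
      exact ⟨m, rfl⟩
    · simp [h] at hn
  · simp

theorem sum_exp_pow_mul_eq_tsum {ζ : ℂ} {p : ℕ} (hζ : IsPrimitiveRoot ζ p) (hp : p ≠ 0) (z : ℂ) :
    ∑ k ∈ range p, exp (ζ ^ k * z) = p * ∑' m, z ^ (p * m) / (p * m)! := by
  have hexp (w : ℂ) : exp w = ∑' n, w ^ n / n ! := by
    rw [exp_eq_exp_ℂ, NormedSpace.exp_eq_tsum_div]
  simp_rw [hexp,
    ← Summable.tsum_finsetSum fun k _ => NormedSpace.expSeries_div_summable (ζ ^ k * z),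
    mul_pow, mul_div_assoc, ← Finset.sum_mul, hζ.sum_pow_pow_eq_ite, ite_mul, zero_mul,
    tsum_ite_dvd_eq_tsum_mul hp, tsum_mul_left]

theorem one_add_pow_div_factorial_le_tsum {p : ℕ} (hp : p ≠ 0) (hpeven : Even p) (x : ℝ) :
    1 + x ^ p / p ! ≤ ∑' m, x ^ (p * m) / (p * m)! := by
  have hsum : Summable fun m => x ^ (p * m) / (p * m)! :=
    (Real.summable_pow_div_factorial x).comp_injective (mul_right_injective₀ hp)
  have hnonneg (m : ℕ) : 0 ≤ x ^ (p * m) / (p * m)! :=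
    div_nonneg ((hpeven.mul_right m).pow_nonneg x) (by positivity)
  simpa [Finset.sum_range_succ] using hsum.sum_le_tsum (range 2) (fun m _ => hnonneg m)

theorem lt_mul_one_add_pow_div_factorial {p : ℕ} (hp : p ≠ 0) {t : ℝ} (ht : 0 ≤ t) :
    t < p * (1 + t ^ p / p !) := by
  have hp0 : (0 : ℝ) < p := by positivity
  rcases lt_or_ge t p with htp | htp
  · have : 0 ≤ t ^ p / p ! := by positivity
    nlinarith
  · have hfac : (p ! : ℝ) ≤ (p : ℝ) ^ p := by exact_mod_cast Nat.factorial_le_pow p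
    calc t = p * (t / p) := by field_simp
      _ ≤ p * (t / p) ^ p := by gcongr; exact le_self_pow₀ ((one_le_div hp0).2 htp) hp
      _ = p * (t ^ p / p ^ p) := by rw [div_pow]
      _ ≤ p * (t ^ p / p !) := by gcongr
      _ < p * (1 + t ^ p / p !) := by gcongr; linarith

theorem f_lambda_abs_gt_on_real (p : ℕ) (hp : 3 ≤ p) (hpeven : Even p)
    (lam : ℝ) (hlam : 1 ≤ |lam|)
    (f : ℂ → ℂ)
    (hf : ∀ z : ℂ, f z = lam * ∑ k ∈ Finset.range p,
      Complex.exp ((Complex.exp (2 * Real.pi * Complex.I / p)) ^ k * z))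
    (x : ℝ) : |x| < ‖f x‖ := by
  have hp0 : p ≠ 0 := by omega
  set S := ∑' m, x ^ (p * m) / (p * m)!
  have hfx : f x = ((lam * (p * S) : ℝ) : ℂ) := by
    rw [hf, sum_exp_pow_mul_eq_tsum (isPrimitiveRoot_exp p hp0) hp0]
    push_cast [S, ofReal_tsum]
    rfl
  have hS : |x| < p * S := by
    calc |x| < p * (1 + |x| ^ p / p !) := lt_mul_one_add_pow_div_factorial hp0 (abs_nonneg x)
      _ ≤ p * S := by
        rw [hpeven.pow_abs]
        gcongr
        exact one_add_pow_div_factorial_le_tsum hp0 hpeven x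
  have hS0 : 0 ≤ p * S := (abs_nonneg x).trans hS.le
  calc |x| < p * S := hS
    _ ≤ |lam| * (p * S) := le_mul_of_one_le_left hS0 hlam
    _ = ‖f x‖ := by rw [hfx, norm_real, Real.norm_eq_abs, abs_mul, abs_of_nonneg hS0]
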